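/- arXiv:math/0403082 — 4 statements merged into one kernel-verified Lean document; each statement's English description precedes it below -/
import Mathlib

section
/- Let K ≥ 1 be a real number. For all sufficiently large primes p the following holds: if a₁, ..., a_k are residues modulo p (0 ≤ aᵢ ≤ p−1) with k < (log p)/(2K log log p), then there exists an integer n with 1 ≤ n ≤ p−1 such that ‖aᵢ n / p‖ < 1/(log p)^K for every i = 1, 2, ..., k. -/
/-!
Dirichlet's box principle: split `[0, 1)` into `M = ⌈(log p)^K⌉` intervals of length `1/M`.
The `p` vectors of fractional parts `({a₁ n / p}, …, {a_k n / p})`, `0 ≤ n < p`, fall into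
`M^k` boxes, and since `M ≤ (log p)^(2K)` the bound on `k` makes `M^k < p`. So two of them,
for `n₁ < n₂`, share a box, and `n = n₂ - n₁` works.
-/

/-- `‖x‖`, the distance from `x` to the nearest integer. -/
noncomputable def distToNearestInt (x : ℝ) : ℝ := |x - round x|

open Real

lemma distToNearestInt_le_abs_sub_intCast (x : ℝ) (m : ℤ) : distToNearestInt x ≤ |x - m| :=
  round_le x m

lemma distToNearestInt_sub_lt_of_floor_mul_fract_eq {s t : ℝ} {M : ℕ} (hM : 0 < M)
    (h : ⌊M * Int.fract s⌋₊ = ⌊M * Int.fract t⌋₊) : distToNearestInt (s - t) < 1 / M := by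
  have hMR : (0 : ℝ) < M := by exact_mod_cast hM
  have hfloor : ⌊M * Int.fract s⌋ = ⌊M * Int.fract t⌋ := by
    rw [← Int.natCast_floor_eq_floor (by positivity), ← Int.natCast_floor_eq_floor (by positivity),
      h]
  have hscaled : |M * Int.fract s - M * Int.fract t| < 1 :=
    Int.abs_sub_lt_one_of_floor_eq_floor hfloor
  rw [← mul_sub, abs_mul, abs_of_pos hMR, ← lt_div_iff₀' hMR] at hscaled
  calc distToNearestInt (s - t) ≤ |s - t - ((⌊s⌋ - ⌊t⌋ : ℤ) : ℝ)| :=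
        distToNearestInt_le_abs_sub_intCast _ _
    _ = |Int.fract s - Int.fract t| := by rw [Int.fract, Int.fract]; push_cast; ring_nf
    _ < 1 / M := hscaled

theorem exists_distToNearestInt_mul_lt {ι : Type*} [Fintype ι] (x : ι → ℝ) {M N : ℕ}
    (hM : 0 < M) (hN : M ^ Fintype.card ι < N) :
    ∃ n : ℕ, 0 < n ∧ n < N ∧ ∀ i, distToNearestInt (n * x i) < 1 / M := by
  classical
  let box : Fin N → ι → Fin M := fun n i =>
    ⟨⌊M * Int.fract (n * x i)⌋₊, by
      refine (Nat.floor_lt (by positivity)).mpr ?_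
      have := Int.fract_lt_one ((n : ℝ) * x i)
      have hMR : (0 : ℝ) < M := by exact_mod_cast hM
      nlinarith⟩
  obtain ⟨n₁, n₂, hne, hbox⟩ := Fintype.exists_ne_map_eq_of_card_lt box (by simpa using hN)
  wlog hlt : n₁ < n₂ generalizing n₁ n₂
  · exact this n₂ n₁ hne.symm hbox.symm (lt_of_le_of_ne (not_lt.mp hlt) hne.symm)
  refine ⟨n₂ - n₁, by omega, by omega, fun i => ?_⟩
  have hi : ⌊M * Int.fract (n₂ * x i)⌋₊ = ⌊M * Int.fract (n₁ * x i)⌋₊ :=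
    congrArg Fin.val (congrFun hbox i).symm
  have hdist := distToNearestInt_sub_lt_of_floor_mul_fract_eq hM hi
  rwa [← sub_mul, ← Nat.cast_sub hlt.le] at hdist

lemma ceil_rpow_pow_lt_exp {L K : ℝ} {k : ℕ} (hL : 2 ≤ L) (hK : 1 ≤ K)
    (hk : (k : ℝ) < L / (2 * K * log L)) : (⌈L ^ K⌉₊ : ℝ) ^ k < exp L := by
  have hlogL : 0 < log L := log_pos (by linarith)
  have hLK : 2 ≤ L ^ K := hL.trans (self_le_rpow_of_one_le (by linarith) hK)
  have hceil : (⌈L ^ K⌉₊ : ℝ) ≤ exp (2 * K * log L) :=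
    calc (⌈L ^ K⌉₊ : ℝ) ≤ L ^ K + 1 := (Nat.ceil_lt_add_one (by linarith)).le
      _ ≤ (L ^ K) ^ 2 := by nlinarith
      _ = exp (2 * K * log L) := by
        rw [rpow_def_of_pos (by linarith), ← exp_nat_mul]; push_cast; ring_nf
  calc (⌈L ^ K⌉₊ : ℝ) ^ k ≤ exp (2 * K * log L) ^ k := by gcongr
    _ = exp (k * (2 * K * log L)) := (exp_nat_mul _ k).symm
    _ < exp L := exp_lt_exp.mpr ((lt_div_iff₀ (by positivity)).mp hk)

lemma two_le_log_of_eight_le {x : ℝ} (hx : 8 ≤ x) : 2 ≤ log x := by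
  rw [le_log_iff_exp_le (by linarith), show (2 : ℝ) = 1 + 1 by norm_num, exp_add]
  nlinarith [exp_one_lt_d9, exp_pos 1]

/-- Dirichlet pigeonhole lemma: let `K ≥ 1`. For all sufficiently large primes `p`, if
`a₁, ..., a_k` are residues mod `p` (with `0 ≤ aᵢ ≤ p - 1`) and
`k < log p / (2 K log log p)`, then there is an integer `1 ≤ n ≤ p - 1` with
`‖aᵢ n / p‖ < 1 / (log p)^K` for every `i`. -/
theorem dirichlet_bohr_lemma (K : ℝ) (hK : 1 ≤ K) :
    ∃ p₀ : ℕ, ∀ p : ℕ, p.Prime → p₀ ≤ p →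
      ∀ (k : ℕ) (a : Fin k → ℕ), (∀ i, a i ≤ p - 1) →
        (k : ℝ) < Real.log p / (2 * K * Real.log (Real.log p)) →
        ∃ n : ℕ, 1 ≤ n ∧ n ≤ p - 1 ∧
          ∀ i : Fin k, distToNearestInt ((a i * n : ℕ) / (p : ℝ)) < 1 / Real.log p ^ K := by
  refine ⟨8, fun p _ hp k a _ hk => ?_⟩
  have hL : 2 ≤ log p := two_le_log_of_eight_le (by exact_mod_cast hp)
  have hLK : 0 < log p ^ K := rpow_pos_of_pos (by linarith) K
  have hbound : ⌈log p ^ K⌉₊ ^ Fintype.card (Fin k) < p := by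
    have hpow := ceil_rpow_pow_lt_exp hL hK hk
    rw [exp_log (by positivity)] at hpow
    simpa using (by exact_mod_cast hpow : ⌈log p ^ K⌉₊ ^ k < p)
  obtain ⟨n, hn₀, hnp, hn⟩ :=
    exists_distToNearestInt_mul_lt (fun i => (a i : ℝ) / p) (Nat.ceil_pos.mpr hLK) hbound
  refine ⟨n, hn₀, by omega, fun i => ?_⟩
  calc distToNearestInt ((a i * n : ℕ) / (p : ℝ)) = distToNearestInt (n * ((a i : ℝ) / p)) := by
        push_cast; ring_nf
    _ < 1 / ⌈log p ^ K⌉₊ := hn i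
    _ ≤ 1 / log p ^ K := one_div_le_one_div_of_le hLK (Nat.le_ceil _)
end

section
/- For all sufficiently large primes p the following holds: for every function w defined on the residues 0, 1, ..., p−1 with 0 ≤ w(m) ≤ 1 for all m, there exists a function u on the residues 0, 1, ..., p−1 with u(m) ∈ {0,1} for all m, such that (i) |û(a) − ŵ(a)| ≤ 3·(log p)·√p for all a = 0, 1, ..., p−1, and (ii) û(0) = ŵ(0) + δ for some real δ with 0 ≤ δ < 1. -/
set_option maxHeartbeats 1000000
open Finset Real

namespace RR
variable {ι : Type*} [Fintype ι] [DecidableEq ι]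

noncomputable def pr (w : ι → ℝ) (ω : ι → Bool) : ℝ := ∏ i, if ω i then w i else 1 - w i

noncomputable def β (b : Bool) : ℝ := if b then 1 else 0

omit [DecidableEq ι] in
lemma pr_nonneg {w : ι → ℝ} (hw : ∀ i, 0 ≤ w i ∧ w i ≤ 1) (ω : ι → Bool) : 0 ≤ pr w ω :=
  Finset.prod_nonneg fun i _ => by
    rcases hw i with ⟨h1, h2⟩; split <;> linarith

lemma indep (w : ι → ℝ) (g : ι → Bool → ℝ) :
    ∑ ω : ι → Bool, pr w ω * ∏ i, g i (ω i)
      = ∏ i, (w i * g i true + (1 - w i) * g i false) := by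
  have h : ∀ ω : ι → Bool, pr w ω * ∏ i, g i (ω i)
      = ∏ i, ((if ω i then w i else 1 - w i) * g i (ω i)) := by
    intro ω; rw [pr, ← Finset.prod_mul_distrib]
  simp_rw [h]
  rw [← Fintype.prod_sum (fun i b => (if b then w i else 1 - w i) * g i b)]
  simp [Fintype.sum_bool]

lemma sum_pr (w : ι → ℝ) : ∑ ω : ι → Bool, pr w ω = 1 := by
  have := indep w (fun _ _ => (1:ℝ))
  simpa using this

lemma exp_mul_le_of_abs_le {t y : ℝ} (hy : |y| ≤ 1) :
    Real.exp (t * y) ≤ Real.cosh t + y * Real.sinh t := by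
  rw [abs_le] at hy
  have h := convexOn_exp.2 (Set.mem_univ (-t)) (Set.mem_univ t)
    (show (0:ℝ) ≤ (1 - y)/2 by linarith) (show (0:ℝ) ≤ (1 + y)/2 by linarith)
    (show (1 - y)/2 + (1 + y)/2 = 1 by ring)
  simp only [smul_eq_mul] at h
  calc Real.exp (t * y) = Real.exp ((1 - y)/2 * (-t) + (1 + y)/2 * t) := by ring_nf
    _ ≤ (1 - y)/2 * Real.exp (-t) + (1 + y)/2 * Real.exp t := h
    _ = Real.cosh t + y * Real.sinh t := by rw [Real.cosh_eq, Real.sinh_eq]; ring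

lemma bernoulli_mgf_le {w t c : ℝ} (hw0 : 0 ≤ w) (hw1 : w ≤ 1) (hc : |c| ≤ 1) :
    w * Real.exp (t * c * (β true - w)) + (1 - w) * Real.exp (t * c * (β false - w))
      ≤ Real.exp (t ^ 2 / 2) := by
  have h1 : Real.exp (t * c * (1 - w)) ≤ Real.cosh (t * c) + (1 - w) * Real.sinh (t * c) :=
    exp_mul_le_of_abs_le (by rw [abs_le]; constructor <;> linarith)
  have h2 : Real.exp (t * c * (0 - w)) ≤ Real.cosh (t * c) + (0 - w) * Real.sinh (t * c) :=
    exp_mul_le_of_abs_le (by rw [abs_le]; constructor <;> linarith)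
  have key : w * Real.exp (t * c * (1 - w)) + (1 - w) * Real.exp (t * c * (0 - w))
      ≤ Real.cosh (t * c) := by nlinarith
  have h3 : Real.cosh (t * c) ≤ Real.exp ((t * c) ^ 2 / 2) := Real.cosh_le_exp_half_sq _
  have h4 : Real.exp ((t * c) ^ 2 / 2) ≤ Real.exp (t ^ 2 / 2) := by
    apply Real.exp_le_exp.2
    have : c ^ 2 ≤ 1 := by nlinarith [abs_nonneg c, sq_abs c]
    nlinarith [sq_nonneg t]
  simp only [β, if_true, if_false, reduceIte]
  calc w * Real.exp (t * c * (1 - w)) + (1 - w) * Real.exp (t * c * (0 - w))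
      ≤ Real.cosh (t * c) := key
    _ ≤ _ := h3.trans h4

/-- Chernoff bound for indicator-weighted sums. -/
lemma chernoff (w c : ι → ℝ) (hw : ∀ i, 0 ≤ w i ∧ w i ≤ 1) (hc : ∀ i, |c i| ≤ 1)
    (s t : ℝ) (ht : 0 ≤ t) :
    ∑ ω : ι → Bool, pr w ω *
        (if s < ∑ i, c i * (β (ω i) - w i) then (1:ℝ) else 0)
      ≤ Real.exp ((Fintype.card ι : ℝ) * t ^ 2 / 2 - t * s) := by
  have step1 : ∀ ω : ι → Bool,
      pr w ω * (if s < ∑ i, c i * (β (ω i) - w i) then (1:ℝ) else 0)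
        ≤ pr w ω * (Real.exp (-(t * s)) * ∏ i, Real.exp (t * c i * (β (ω i) - w i))) := by
    intro ω
    have hpr := pr_nonneg hw ω
    have hprod : Real.exp (-(t * s)) * ∏ i, Real.exp (t * c i * (β (ω i) - w i))
        = Real.exp (t * ((∑ i, c i * (β (ω i) - w i)) - s)) := by
      rw [← Real.exp_sum, ← Real.exp_add]
      congr 1
      rw [mul_sub, Finset.mul_sum]
      rw [sub_eq_add_neg, add_comm]
      congr 1
      exact Finset.sum_congr rfl fun i _ => by ring
    rw [hprod]
    split
    · rename_i hlt
      have : (0:ℝ) ≤ t * ((∑ i, c i * (β (ω i) - w i)) - s) :=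
        mul_nonneg ht (by linarith)
      have := Real.one_le_exp this
      nlinarith
    · simpa using mul_nonneg hpr (by positivity)
  calc ∑ ω : ι → Bool, pr w ω * (if s < ∑ i, c i * (β (ω i) - w i) then (1:ℝ) else 0)
      ≤ ∑ ω : ι → Bool, pr w ω *
          (Real.exp (-(t * s)) * ∏ i, Real.exp (t * c i * (β (ω i) - w i))) :=
        Finset.sum_le_sum fun ω _ => step1 ω
    _ = Real.exp (-(t * s)) *
          ∑ ω : ι → Bool, pr w ω * ∏ i, Real.exp (t * c i * (β (ω i) - w i)) := by
        rw [Finset.mul_sum]; congr 1; funext ω; ring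
    _ = Real.exp (-(t * s)) * ∏ i, (w i * Real.exp (t * c i * (β true - w i))
          + (1 - w i) * Real.exp (t * c i * (β false - w i))) := by
        rw [indep w (fun i b => Real.exp (t * c i * (β b - w i)))]
    _ ≤ Real.exp (-(t * s)) * ∏ i, Real.exp (t ^ 2 / 2) := by
        refine mul_le_mul_of_nonneg_left ?_ (Real.exp_nonneg _)
        refine Finset.prod_le_prod ?_ ?_
        · intro i _
          exact add_nonneg (mul_nonneg (hw i).1 (Real.exp_nonneg _))
            (mul_nonneg (by linarith [(hw i).2]) (Real.exp_nonneg _))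
        · intro i _
          exact bernoulli_mgf_le (hw i).1 (hw i).2 (hc i)
    _ = Real.exp ((Fintype.card ι : ℝ) * t ^ 2 / 2 - t * s) := by
        rw [Finset.prod_const, Finset.card_univ, ← Real.exp_nat_mul, ← Real.exp_add]
        congr 1
        ring

lemma exists_good {κ : Type*} [Fintype κ] (w : ι → ℝ) (hw : ∀ i, 0 ≤ w i ∧ w i ≤ 1)
    (c : κ → ι → ℝ) (hc : ∀ k i, |c k i| ≤ 1) (s t : ℝ) (ht : 0 ≤ t)
    (hsmall : (Fintype.card κ : ℝ) *
        (2 * Real.exp ((Fintype.card ι : ℝ) * t ^ 2 / 2 - t * s)) < 1) :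
    ∃ ω : ι → Bool, ∀ k, |∑ i, c k i * (β (ω i) - w i)| ≤ s := by
  by_contra hcon
  push_neg at hcon
  set E := Real.exp ((Fintype.card ι : ℝ) * t ^ 2 / 2 - t * s) with hE
  have hind_nonneg : ∀ (P : Prop) [Decidable P], (0:ℝ) ≤ (if P then (1:ℝ) else 0) := by
    intro P _; split <;> norm_num
  have key : (1:ℝ) ≤ ∑ ω : ι → Bool, pr w ω * ∑ k,
      ((if s < ∑ i, c k i * (β (ω i) - w i) then (1:ℝ) else 0)
        + (if s < ∑ i, (-c k i) * (β (ω i) - w i) then (1:ℝ) else 0)) := by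
    refine le_trans (le_of_eq (sum_pr w).symm) (Finset.sum_le_sum ?_)
    intro ω _
    have hpr := pr_nonneg hw ω
    obtain ⟨k0, hk0⟩ := hcon ω
    have hone : (1:ℝ) ≤ ∑ k,
        ((if s < ∑ i, c k i * (β (ω i) - w i) then (1:ℝ) else 0)
          + (if s < ∑ i, (-c k i) * (β (ω i) - w i) then (1:ℝ) else 0)) := by
      have hterm : (1:ℝ) ≤ (if s < ∑ i, c k0 i * (β (ω i) - w i) then (1:ℝ) else 0)
          + (if s < ∑ i, (-c k0 i) * (β (ω i) - w i) then (1:ℝ) else 0) := by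
        have hneg : ∑ i, (-c k0 i) * (β (ω i) - w i)
            = -∑ i, c k0 i * (β (ω i) - w i) := by
          simp [neg_mul]
        rcases lt_abs.1 hk0 with h | h
        · rw [if_pos h]
          have := hind_nonneg (s < ∑ i, (-c k0 i) * (β (ω i) - w i))
          linarith
        · rw [hneg] at *
          rw [if_pos h]
          have := hind_nonneg (s < ∑ i, c k0 i * (β (ω i) - w i))
          linarith
      calc (1:ℝ) ≤ _ := hterm
        _ ≤ _ := Finset.single_le_sum
            (f := fun k => (if s < ∑ i, c k i * (β (ω i) - w i) then (1:ℝ) else 0)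
              + (if s < ∑ i, (-c k i) * (β (ω i) - w i) then (1:ℝ) else 0))
            (fun k _ => add_nonneg (hind_nonneg _) (hind_nonneg _)) (Finset.mem_univ k0)
    calc pr w ω = pr w ω * 1 := (mul_one _).symm
      _ ≤ _ := mul_le_mul_of_nonneg_left hone hpr
  have swap : ∑ ω : ι → Bool, pr w ω * ∑ k,
      ((if s < ∑ i, c k i * (β (ω i) - w i) then (1:ℝ) else 0)
        + (if s < ∑ i, (-c k i) * (β (ω i) - w i) then (1:ℝ) else 0))
      ≤ (Fintype.card κ : ℝ) * (2 * E) := by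
    have : ∀ ω : ι → Bool, pr w ω * ∑ k,
        ((if s < ∑ i, c k i * (β (ω i) - w i) then (1:ℝ) else 0)
          + (if s < ∑ i, (-c k i) * (β (ω i) - w i) then (1:ℝ) else 0))
        = ∑ k, (pr w ω * (if s < ∑ i, c k i * (β (ω i) - w i) then (1:ℝ) else 0)
          + pr w ω * (if s < ∑ i, (-c k i) * (β (ω i) - w i) then (1:ℝ) else 0)) := by
      intro ω; rw [Finset.mul_sum]; exact Finset.sum_congr rfl fun k _ => by ring
    simp_rw [this]
    rw [Finset.sum_comm]
    calc ∑ k : κ, ∑ ω : ι → Bool,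
        (pr w ω * (if s < ∑ i, c k i * (β (ω i) - w i) then (1:ℝ) else 0)
          + pr w ω * (if s < ∑ i, (-c k i) * (β (ω i) - w i) then (1:ℝ) else 0))
        = ∑ k : κ, ((∑ ω : ι → Bool, pr w ω *
            (if s < ∑ i, c k i * (β (ω i) - w i) then (1:ℝ) else 0))
          + ∑ ω : ι → Bool, pr w ω *
            (if s < ∑ i, (-c k i) * (β (ω i) - w i) then (1:ℝ) else 0)) := by
          exact Finset.sum_congr rfl fun k _ => Finset.sum_add_distrib
      _ ≤ ∑ k : κ, (E + E) := by
          apply Finset.sum_le_sum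
          intro k _
          have h1 := chernoff w (c k) hw (hc k) s t ht
          have h2 := chernoff w (fun i => -c k i) hw (fun i => by simpa using hc k i) s t ht
          exact add_le_add h1 h2
      _ = (Fintype.card κ : ℝ) * (2 * E) := by
          rw [Finset.sum_const, Finset.card_univ, nsmul_eq_mul]; ring
  linarith
end RR

namespace RR

lemma sum_range_eq_sum_zmod {M : Type*} [AddCommMonoid M] {p : ℕ} [NeZero p] (g : ZMod p → M) :
    ∑ n ∈ Finset.range p, g (n : ZMod p) = ∑ i : ZMod p, g i := by
  refine Finset.sum_nbij' (fun n => (n : ZMod p)) (fun i => i.val) ?_ ?_ ?_ ?_ ?_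
  · intro n _; exact Finset.mem_univ _
  · intro i _; exact Finset.mem_range.2 (ZMod.val_lt i)
  · intro n hn; exact ZMod.val_cast_of_lt (Finset.mem_range.1 hn)
  · intro i _; exact ZMod.natCast_rightInverse i
  · intro n _; rfl

end RR

open RR

/-- The discrete Fourier transform of a function `f` on the residues mod `p`:
`f̂(a) = ∑_{n=0}^{p-1} f(n) e^{2πian/p}`. -/
noncomputable def dftFun (p : ℕ) (f : ZMod p → ℂ) (a : ℕ) : ℂ :=
  ∑ n ∈ Finset.range p, f (n : ZMod p) *
    Complex.exp (2 * (Real.pi : ℂ) * Complex.I * (a : ℂ) * (n : ℂ) / (p : ℂ))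

/-- For all sufficiently large primes `p`: for every `w` on the residues mod `p` with
`0 ≤ w(m) ≤ 1`, there is a `{0,1}`-valued `u` on the residues mod `p` such that
(i) `|û(a) - ŵ(a)| ≤ 3 (log p) √p` for all `a = 0, ..., p-1`, and
(ii) `û(0) = ŵ(0) + δ` for some real `0 ≤ δ < 1`. -/
theorem random_rounding_of_weight_function :
    ∃ p₀ : ℕ, ∀ p : ℕ, p.Prime → p₀ ≤ p →
      ∀ w : ZMod p → ℝ, (∀ m, 0 ≤ w m ∧ w m ≤ 1) →
        ∃ u : ZMod p → ℝ, (∀ m, u m = 0 ∨ u m = 1) ∧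
          (∀ a : ℕ, a ≤ p - 1 →
            ‖dftFun p (fun n => (u n : ℂ)) a - dftFun p (fun n => (w n : ℂ)) a‖ ≤
              3 * Real.log p * Real.sqrt p) ∧
          ∃ δ : ℝ, 0 ≤ δ ∧ δ < 1 ∧
            dftFun p (fun n => (u n : ℂ)) 0 = dftFun p (fun n => (w n : ℂ)) 0 + (δ : ℂ) := by
  use 10 ^ 9
  intro p hp hp0 w hw
  haveI : NeZero p := ⟨hp.pos.ne'⟩
  have hppos : (0:ℝ) < p := by exact_mod_cast hp.pos
  set L : ℝ := Real.log p with hLdef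
  have hL16 : 16 ≤ L := by
    rw [hLdef, Real.le_log_iff_exp_le hppos]
    have h3 : Real.exp 1 ≤ 3 := by nlinarith [Real.exp_one_lt_d9]
    have hp' : (10:ℝ) ^ 9 ≤ p := by exact_mod_cast hp0
    calc Real.exp 16 = Real.exp 1 ^ (16:ℕ) := by
          rw [Real.exp_one_pow]; norm_num
      _ ≤ 3 ^ (16:ℕ) := pow_le_pow_left₀ (Real.exp_nonneg 1) h3 16
      _ ≤ p := by norm_num at hp' ⊢; linarith
  set sq : ℝ := Real.sqrt p with hsqdef
  have hsqpos : 0 < sq := Real.sqrt_pos.2 hppos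
  have hsqsq : sq * sq = p := Real.mul_self_sqrt hppos.le
  have hsq1 : 1 ≤ sq := by
    rw [hsqdef]
    rw [show (1:ℝ) = Real.sqrt 1 by simp]
    exact Real.sqrt_le_sqrt (by exact_mod_cast hp.one_lt.le)
  set s : ℝ := sq * L / 2 with hsdef
  set t : ℝ := L / (2 * sq) with htdef
  have ht : 0 ≤ t := by positivity
  -- the coefficient family
  set θ : ℕ → ZMod p → ℝ := fun a i => 2 * Real.pi * a * (ZMod.val i) / p with hθdef
  set c : ZMod p × Bool → ZMod p → ℝ :=
    fun k i => if k.2 then Real.cos (θ k.1.val i) else Real.sin (θ k.1.val i) with hcdef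
  have hc : ∀ k i, |c k i| ≤ 1 := by
    intro k i
    by_cases hk : k.2 <;> simp [hcdef, hk, Real.abs_cos_le_one, Real.abs_sin_le_one]
  have hcardι : (Fintype.card (ZMod p) : ℝ) = p := by rw [ZMod.card]
  have hexp : (Fintype.card (ZMod p) : ℝ) * t ^ 2 / 2 - t * s = -(L ^ 2 / 8) := by
    rw [hcardι, ← hsqsq, htdef, hsdef]
    field_simp
    ring
  have hsmall : (Fintype.card (ZMod p × Bool) : ℝ) *
      (2 * Real.exp ((Fintype.card (ZMod p) : ℝ) * t ^ 2 / 2 - t * s)) < 1 := by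
    have hcard : (Fintype.card (ZMod p × Bool) : ℝ) = 2 * p := by
      rw [Fintype.card_prod, ZMod.card, Fintype.card_bool]; push_cast; ring
    rw [hcard, hexp]
    have hlog : Real.log (4 * p) < L ^ 2 / 8 := by
      rw [Real.log_mul (by norm_num) hppos.ne']
      have h4 : Real.log 4 < 4 := (Real.log_le_sub_one_of_pos (by norm_num)).trans_lt (by norm_num)
      nlinarith
    have h1 : (4:ℝ) * p < Real.exp (L ^ 2 / 8) := (Real.log_lt_iff_lt_exp (by positivity)).1 hlog
    have h2 : (4:ℝ) * p * Real.exp (-(L ^ 2 / 8))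
        < Real.exp (L ^ 2 / 8) * Real.exp (-(L ^ 2 / 8)) :=
      mul_lt_mul_of_pos_right h1 (Real.exp_pos _)
    rw [← Real.exp_add] at h2
    simp only [add_neg_cancel, Real.exp_zero] at h2
    nlinarith [Real.exp_pos (-(L ^ 2 / 8))]
  obtain ⟨ω, hω⟩ := exists_good w hw c hc s t ht hsmall
  -- counting setup
  set A0 : Finset (ZMod p) := Finset.univ.filter (fun i => ω i = true) with hA0def
  set W : ℝ := ∑ i : ZMod p, w i with hWdef
  have hβ : ∀ i : ZMod p, β (ω i) = if i ∈ A0 then (1:ℝ) else 0 := by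
    intro i; rw [β, hA0def]; simp
  have hsum_β : ∑ i : ZMod p, β (ω i) = (A0.card : ℝ) := by
    simp_rw [hβ]
    rw [Finset.sum_ite_mem, Finset.univ_inter, Finset.sum_const, nsmul_eq_mul, mul_one]
  have hW0 : 0 ≤ W := Finset.sum_nonneg fun i _ => (hw i).1
  have hWp : W ≤ p := by
    calc W ≤ ∑ _i : ZMod p, (1:ℝ) := Finset.sum_le_sum fun i _ => (hw i).2
      _ = p := by rw [Finset.sum_const, Finset.card_univ, ZMod.card, nsmul_eq_mul, mul_one]
  set k : ℕ := ⌈W⌉₊ with hkdef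
  have hkW : 0 ≤ (k:ℝ) - W := sub_nonneg.2 (Nat.le_ceil W)
  have hkW1 : (k:ℝ) - W < 1 := by
    have := Nat.ceil_lt_add_one hW0
    rw [hkdef]; linarith
  have hkp : k ≤ p := Nat.ceil_le.2 (by exact_mod_cast hWp)
  -- deviation of the count
  have hzero : |(A0.card : ℝ) - W| ≤ s := by
    have h := hω ((0 : ZMod p), true)
    have hc0 : ∀ i : ZMod p, c ((0:ZMod p), true) i = 1 := by
      intro i
      simp only [hcdef, hθdef, if_true, ZMod.val_zero]
      norm_num
    simp_rw [hc0, one_mul, Finset.sum_sub_distrib, hsum_β] at h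
    rwa [hWdef]
  -- construct the rounding set A
  have hAex : ∃ A : Finset (ZMod p), A.card = k ∧
      ∑ i : ZMod p, |(if i ∈ A then (1:ℝ) else 0) - β (ω i)| ≤ s + 1 := by
    have habs0 := abs_le.1 hzero
    rcases le_or_gt A0.card k with hle | hlt
    · obtain ⟨A, hA0A, -, hAcard⟩ := Finset.exists_subsuperset_card_eq
        (Finset.subset_univ A0) hle (by rwa [Finset.card_univ, ZMod.card])
      refine ⟨A, hAcard, ?_⟩
      have hpt : ∀ i : ZMod p, |(if i ∈ A then (1:ℝ) else 0) - β (ω i)|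
          = if i ∈ A \ A0 then (1:ℝ) else 0 := by
        intro i
        rw [hβ i]
        by_cases h1 : i ∈ A0
        · have h2 : i ∈ A := hA0A h1
          simp [h1, h2]
        · by_cases h2 : i ∈ A <;> simp [h1, h2]
      simp_rw [hpt]
      rw [Finset.sum_ite_mem, Finset.univ_inter, Finset.sum_const, nsmul_eq_mul, mul_one,
        Finset.card_sdiff_of_subset hA0A, hAcard, Nat.cast_sub hle]
      linarith
    · obtain ⟨A, hAA0, hAcard⟩ := Finset.exists_subset_card_eq hlt.le
      refine ⟨A, hAcard, ?_⟩
      have hpt : ∀ i : ZMod p, |(if i ∈ A then (1:ℝ) else 0) - β (ω i)|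
          = if i ∈ A0 \ A then (1:ℝ) else 0 := by
        intro i
        rw [hβ i]
        by_cases h1 : i ∈ A
        · have h2 : i ∈ A0 := hAA0 h1
          simp [h1, h2]
        · by_cases h2 : i ∈ A0 <;> simp [h1, h2]
      simp_rw [hpt]
      rw [Finset.sum_ite_mem, Finset.univ_inter, Finset.sum_const, nsmul_eq_mul, mul_one,
        Finset.card_sdiff_of_subset hAA0, hAcard, Nat.cast_sub hlt.le]
      linarith
  obtain ⟨A, hAcard, hflip⟩ := hAex
  set u : ZMod p → ℝ := fun i => if i ∈ A then (1:ℝ) else 0 with hudef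
  have hsum_u : ∑ i : ZMod p, u i = (k : ℝ) := by
    rw [hudef]
    rw [Finset.sum_ite_mem, Finset.univ_inter, Finset.sum_const, nsmul_eq_mul, mul_one, hAcard]
  -- dft rewriting
  have hdft : ∀ (f : ZMod p → ℝ) (a : ℕ), a < p →
      dftFun p (fun n => (f n : ℂ)) a
        = ∑ i : ZMod p, (f i : ℂ) * Complex.exp ((θ a i : ℝ) * Complex.I) := by
    intro f a hap
    rw [dftFun]
    calc ∑ n ∈ Finset.range p, (f (n : ZMod p) : ℂ) *
          Complex.exp (2 * (Real.pi : ℂ) * Complex.I * (a:ℂ) * (n:ℂ) / (p:ℂ))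
        = ∑ n ∈ Finset.range p,
            ((fun i : ZMod p => (f i : ℂ) * Complex.exp ((θ a i : ℝ) * Complex.I)) (n : ZMod p)) := by
          refine Finset.sum_congr rfl fun n hn => ?_
          have hval : ((n : ZMod p)).val = n := ZMod.val_cast_of_lt (Finset.mem_range.1 hn)
          simp only [hθdef, hval]
          congr 2
          push_cast
          ring
      _ = ∑ i : ZMod p, (f i : ℂ) * Complex.exp ((θ a i : ℝ) * Complex.I) :=
          sum_range_eq_sum_zmod (fun i : ZMod p => (f i : ℂ) * Complex.exp ((θ a i : ℝ) * Complex.I))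
  have habs : ∀ (g : ZMod p → ℝ) (a : ℕ),
      ‖∑ i : ZMod p, (g i : ℂ) * Complex.exp ((θ a i : ℝ) * Complex.I)‖
        ≤ |∑ i : ZMod p, Real.cos (θ a i) * g i| + |∑ i : ZMod p, Real.sin (θ a i) * g i| := by
    intro g a
    refine (Complex.norm_le_abs_re_add_abs_im _).trans ?_
    rw [Complex.re_sum, Complex.im_sum]
    have h1 : ∀ i : ZMod p, ((g i : ℂ) * Complex.exp ((θ a i : ℝ) * Complex.I)).re
        = Real.cos (θ a i) * g i := by
      intro i
      rw [Complex.mul_re]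
      simp [Complex.exp_ofReal_mul_I_re, Complex.exp_ofReal_mul_I_im]
      ring
    have h2 : ∀ i : ZMod p, ((g i : ℂ) * Complex.exp ((θ a i : ℝ) * Complex.I)).im
        = Real.sin (θ a i) * g i := by
      intro i
      rw [Complex.mul_im]
      simp [Complex.exp_ofReal_mul_I_re, Complex.exp_ofReal_mul_I_im]
      ring
    simp_rw [h1, h2]
    exact le_refl _
  refine ⟨u, ?_, ?_, ?_⟩
  · intro m
    rw [hudef]
    by_cases h : m ∈ A <;> simp [h]
  · -- main Fourier bound
    intro a ha
    have hap : a < p := by have := hp.pos; omega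
    have hval : ((a : ZMod p)).val = a := ZMod.val_cast_of_lt hap
    set z1 : ℂ := ∑ i : ZMod p, (u i : ℂ) * Complex.exp ((θ a i : ℝ) * Complex.I) with hz1
    set z2 : ℂ := ∑ i : ZMod p, (β (ω i) : ℂ) * Complex.exp ((θ a i : ℝ) * Complex.I) with hz2
    set z3 : ℂ := ∑ i : ZMod p, (w i : ℂ) * Complex.exp ((θ a i : ℝ) * Complex.I) with hz3
    have hd1 : ‖z2 - z3‖ ≤ 2 * s := by
      rw [hz2, hz3, ← Finset.sum_sub_distrib]
      have hcomb : ∀ i : ZMod p,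
          (β (ω i) : ℂ) * Complex.exp ((θ a i : ℝ) * Complex.I)
            - (w i : ℂ) * Complex.exp ((θ a i : ℝ) * Complex.I)
          = ((β (ω i) - w i : ℝ) : ℂ) * Complex.exp ((θ a i : ℝ) * Complex.I) := by
        intro i; push_cast; ring
      simp_rw [hcomb]
      refine (habs (fun i => β (ω i) - w i) a).trans ?_
      have hcos := hω ((a : ZMod p), true)
      have hsin := hω ((a : ZMod p), false)
      simp only [hcdef, hval, Bool.false_eq_true, if_true, if_false, reduceIte] at hcos hsin
      linarith [hcos, hsin]
    have hd2 : ‖z1 - z2‖ ≤ s + 1 := by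
      rw [hz1, hz2, ← Finset.sum_sub_distrib]
      have hcomb : ∀ i : ZMod p,
          (u i : ℂ) * Complex.exp ((θ a i : ℝ) * Complex.I)
            - (β (ω i) : ℂ) * Complex.exp ((θ a i : ℝ) * Complex.I)
          = ((u i - β (ω i) : ℝ) : ℂ) * Complex.exp ((θ a i : ℝ) * Complex.I) := by
        intro i; push_cast; ring
      simp_rw [hcomb]
      refine (norm_sum_le _ _).trans ?_
      have hterm : ∀ i : ZMod p,
          ‖((u i - β (ω i) : ℝ) : ℂ) * Complex.exp ((θ a i : ℝ) * Complex.I)‖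
          = |u i - β (ω i)| := by
        intro i
        rw [norm_mul, Complex.norm_real, Real.norm_eq_abs, Complex.norm_exp_ofReal_mul_I, mul_one]
      simp_rw [hterm]
      exact hflip
    rw [hdft u a hap, hdft w a hap, ← hz1, ← hz3]
    have htri : ‖z1 - z3‖ ≤ ‖z1 - z2‖ + ‖z2 - z3‖ :=
      norm_sub_le_norm_sub_add_norm_sub z1 z2 z3
    have hLsq : 16 ≤ sq * L := by nlinarith
    have : ‖z1 - z3‖ ≤ (s + 1) + 2 * s := htri.trans (add_le_add hd2 hd1)
    refine this.trans ?_
    rw [hsdef]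
    nlinarith
  · -- the zero coefficient
    have h00 : ∀ f : ZMod p → ℝ, dftFun p (fun n => (f n : ℂ)) 0
        = ((∑ i : ZMod p, f i : ℝ) : ℂ) := by
      intro f
      rw [dftFun]
      have hzero' : ∀ n : ℕ, 2 * (Real.pi : ℂ) * Complex.I * ((0:ℕ):ℂ) * (n:ℂ) / (p:ℂ) = 0 := by
        intro n; push_cast; ring
      simp only [hzero', Complex.exp_zero, mul_one]
      rw [sum_range_eq_sum_zmod (fun i => (f i : ℂ))]
      push_cast
      rfl
    refine ⟨(k : ℝ) - W, hkW, hkW1, ?_⟩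
    rw [h00 u, h00 w, hsum_u, ← hWdef]
    push_cast
    ring
end

section
/- Let p be a prime and A, B ⊆ ℤ/pℤ. Then Σ_{u=0}^{p−1} Σ_{v=0}^{p−1} |A ∩ (uB + v)|² ≤ |A|²·|B|² + p²·|B|. -/
open Finset

private lemma sum_range_zmod {M : Type*} [AddCommMonoid M] (p : ℕ) [NeZero p]
    (f : ZMod p → M) : ∑ u ∈ Finset.range p, f (u : ZMod p) = ∑ x : ZMod p, f x := by
  refine Finset.sum_nbij' (i := fun n => (n : ZMod p)) (j := ZMod.val) ?_ ?_ ?_ ?_ ?_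
  · intro a _; exact Finset.mem_univ _
  · intro a _; exact Finset.mem_range.2 (ZMod.val_lt a)
  · intro a ha; exact ZMod.val_cast_of_lt (Finset.mem_range.1 ha)
  · intro a _; exact ZMod.natCast_rightInverse a
  · intro a _; rfl

set_option maxHeartbeats 1000000 in
/-- Second moment: for a prime `p` and `A, B ⊆ ℤ/pℤ`,
`∑_{u=0}^{p-1} ∑_{v=0}^{p-1} |A ∩ (uB + v)|² ≤ |A|² |B|² + p² |B|`. -/
theorem sum_sq_card_inter_dilate_translate (p : ℕ) (hp : p.Prime)
    (A B : Finset (ZMod p)) :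
    ∑ u ∈ Finset.range p, ∑ v ∈ Finset.range p,
        (A ∩ B.image fun b => (u : ZMod p) * b + (v : ZMod p)).card ^ 2 ≤
      A.card ^ 2 * B.card ^ 2 + p ^ 2 * B.card := by
  haveI : Fact p.Prime := ⟨hp⟩
  haveI : NeZero p := ⟨hp.ne_zero⟩
  have hA : A.card ≤ p := by
    have := Finset.card_le_univ A
    simpa [ZMod.card] using this
  -- step 1 : termwise bound by a count of pairs
  have key : ∀ u v : ZMod p,
      (A ∩ B.image fun b => u * b + v).card ^ 2 ≤
      ((B ×ˢ B).filter fun q => u * q.1 + v ∈ A ∧ u * q.2 + v ∈ A).card := by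
    intro u v
    have h1 : (A ∩ B.image fun b => u * b + v).card ≤
        (B.filter fun b => u * b + v ∈ A).card := by
      have hsub : A ∩ B.image (fun b => u * b + v) ⊆
          (B.filter fun b => u * b + v ∈ A).image (fun b => u * b + v) := by
        intro x hx
        simp only [Finset.mem_inter, Finset.mem_image, Finset.mem_filter] at hx ⊢
        obtain ⟨hxA, b, hb, rfl⟩ := hx
        exact ⟨b, ⟨hb, hxA⟩, rfl⟩
      exact (Finset.card_le_card hsub).trans Finset.card_image_le
    calc (A ∩ B.image fun b => u * b + v).card ^ 2
        ≤ (B.filter fun b => u * b + v ∈ A).card ^ 2 := Nat.pow_le_pow_left h1 2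
      _ = ((B ×ˢ B).filter fun q => u * q.1 + v ∈ A ∧ u * q.2 + v ∈ A).card := by
          rw [Finset.filter_product (fun b => u * b + v ∈ A) (fun b => u * b + v ∈ A), Finset.card_product, sq]
  calc ∑ u ∈ Finset.range p, ∑ v ∈ Finset.range p,
        (A ∩ B.image fun b => (u : ZMod p) * b + (v : ZMod p)).card ^ 2
      ≤ ∑ u ∈ Finset.range p, ∑ v ∈ Finset.range p,
        ((B ×ˢ B).filter fun q => (u : ZMod p) * q.1 + (v : ZMod p) ∈ A ∧
          (u : ZMod p) * q.2 + (v : ZMod p) ∈ A).card := by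
        refine Finset.sum_le_sum fun u _ => Finset.sum_le_sum fun v _ => key _ _
    _ = ∑ u ∈ Finset.range p, ∑ v : ZMod p,
        ((B ×ˢ B).filter fun q => (u : ZMod p) * q.1 + v ∈ A ∧
          (u : ZMod p) * q.2 + v ∈ A).card := by
        refine Finset.sum_congr rfl fun u _ => ?_
        refine Finset.sum_nbij' (i := fun n : ℕ => (n : ZMod p)) (j := ZMod.val) ?_ ?_ ?_ ?_ ?_
        · intro a _; exact Finset.mem_univ _
        · intro a _; exact Finset.mem_range.2 (ZMod.val_lt a)
        · intro a ha; exact ZMod.val_cast_of_lt (Finset.mem_range.1 ha)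
        · intro a _; exact ZMod.natCast_rightInverse a
        · intro a _; rfl
    _ = ∑ u : ZMod p, ∑ v : ZMod p,
        ((B ×ˢ B).filter fun q => u * q.1 + v ∈ A ∧ u * q.2 + v ∈ A).card := by
        refine Finset.sum_nbij' (i := fun n : ℕ => (n : ZMod p)) (j := ZMod.val) ?_ ?_ ?_ ?_ ?_
        · intro a _; exact Finset.mem_univ _
        · intro a _; exact Finset.mem_range.2 (ZMod.val_lt a)
        · intro a ha; exact ZMod.val_cast_of_lt (Finset.mem_range.1 ha)
        · intro a _; exact ZMod.natCast_rightInverse a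
        · intro a _; rfl
    _ = ∑ q ∈ B ×ˢ B, ((Finset.univ : Finset (ZMod p × ZMod p)).filter
          fun w => w.1 * q.1 + w.2 ∈ A ∧ w.1 * q.2 + w.2 ∈ A).card := by
        simp only [Finset.card_filter]
        rw [← Finset.sum_product']
        rw [Finset.sum_comm]
        rfl
    _ ≤ A.card ^ 2 * B.card ^ 2 + p ^ 2 * B.card := by
        have hdiag : ∀ q ∈ (B ×ˢ B).filter (fun q : ZMod p × ZMod p => q.1 = q.2),
            ((Finset.univ : Finset (ZMod p × ZMod p)).filter
              fun w => w.1 * q.1 + w.2 ∈ A ∧ w.1 * q.2 + w.2 ∈ A).card ≤ p ^ 2 := by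
          intro q hq
          rw [Finset.mem_filter] at hq
          have : ((Finset.univ : Finset (ZMod p × ZMod p)).filter
              fun w => w.1 * q.1 + w.2 ∈ A ∧ w.1 * q.2 + w.2 ∈ A).card = p * A.card := by
            rw [← hq.2]
            rw [show (Finset.univ : Finset (ZMod p × ZMod p)).filter
                (fun w => w.1 * q.1 + w.2 ∈ A ∧ w.1 * q.1 + w.2 ∈ A) =
                (Finset.univ : Finset (ZMod p × ZMod p)).filter
                (fun w => w.1 * q.1 + w.2 ∈ A) by simp]
            have := Finset.card_nbij'
              (s := (Finset.univ : Finset (ZMod p × ZMod p)).filter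
                (fun w => w.1 * q.1 + w.2 ∈ A))
              (t := (Finset.univ : Finset (ZMod p)) ×ˢ A)
              (i := fun w => (w.1, w.1 * q.1 + w.2))
              (j := fun x => (x.1, x.2 - x.1 * q.1)) ?_ ?_ ?_ ?_
            · rw [this, Finset.card_product, Finset.card_univ, ZMod.card]
            · intro w hw
              simp only [Finset.mem_coe, Finset.mem_filter] at hw
              simp [hw.2]
            · intro x hx
              simp only [Finset.mem_coe, Finset.mem_product] at hx
              simp [hx.2]
            · intro w _; simp
            · intro x _; simp
          rw [this, sq]
          exact Nat.mul_le_mul le_rfl hA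
        have hoff : ∀ q ∈ (B ×ˢ B).filter (fun q : ZMod p × ZMod p => ¬ q.1 = q.2),
            ((Finset.univ : Finset (ZMod p × ZMod p)).filter
              fun w => w.1 * q.1 + w.2 ∈ A ∧ w.1 * q.2 + w.2 ∈ A).card ≤ A.card ^ 2 := by
          intro q hq
          rw [Finset.mem_filter] at hq
          have hd : q.1 - q.2 ≠ 0 := sub_ne_zero.mpr hq.2
          have hcard := Finset.card_nbij'
            (s := (Finset.univ : Finset (ZMod p × ZMod p)).filter
              fun w => w.1 * q.1 + w.2 ∈ A ∧ w.1 * q.2 + w.2 ∈ A)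
            (t := A ×ˢ A)
            (i := fun w => (w.1 * q.1 + w.2, w.1 * q.2 + w.2))
            (j := fun x => ((x.1 - x.2) * (q.1 - q.2)⁻¹,
              x.1 - (x.1 - x.2) * (q.1 - q.2)⁻¹ * q.1)) ?_ ?_ ?_ ?_
          · rw [hcard, Finset.card_product, sq]
          · intro w hw
            simp only [Finset.mem_coe, Finset.mem_filter] at hw
            simp [Finset.mem_product, hw.2.1, hw.2.2]
          · intro x hx
            simp only [Finset.mem_coe, Finset.mem_product] at hx
            simp only [Finset.mem_coe, Finset.mem_filter, Finset.mem_univ, true_and]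
            constructor
            · convert hx.1 using 2
              ring
            · have : (x.1 - x.2) * (q.1 - q.2)⁻¹ * q.2 +
                  (x.1 - (x.1 - x.2) * (q.1 - q.2)⁻¹ * q.1) = x.2 := by
                field_simp
                ring
              rw [this]; exact hx.2
          · intro w _
            ext
            · simp only; field_simp; ring
            · simp only; field_simp; ring
          · intro x _
            ext
            · simp only; ring
            · simp only; field_simp; ring
        calc ∑ q ∈ B ×ˢ B, ((Finset.univ : Finset (ZMod p × ZMod p)).filter
              fun w => w.1 * q.1 + w.2 ∈ A ∧ w.1 * q.2 + w.2 ∈ A).card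
            = (∑ q ∈ (B ×ˢ B).filter (fun q : ZMod p × ZMod p => q.1 = q.2),
                ((Finset.univ : Finset (ZMod p × ZMod p)).filter
                  fun w => w.1 * q.1 + w.2 ∈ A ∧ w.1 * q.2 + w.2 ∈ A).card) +
              ∑ q ∈ (B ×ˢ B).filter (fun q : ZMod p × ZMod p => ¬ q.1 = q.2),
                ((Finset.univ : Finset (ZMod p × ZMod p)).filter
                  fun w => w.1 * q.1 + w.2 ∈ A ∧ w.1 * q.2 + w.2 ∈ A).card := by
              rw [Finset.sum_filter_add_sum_filter_not]
          _ ≤ B.card * p ^ 2 + B.card ^ 2 * A.card ^ 2 := by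
              have h1 : ∑ q ∈ (B ×ˢ B).filter (fun q : ZMod p × ZMod p => q.1 = q.2),
                  ((Finset.univ : Finset (ZMod p × ZMod p)).filter
                    fun w => w.1 * q.1 + w.2 ∈ A ∧ w.1 * q.2 + w.2 ∈ A).card ≤
                  B.card * p ^ 2 := by
                refine le_trans (Finset.sum_le_card_nsmul _ _ _ hdiag) ?_
                rw [smul_eq_mul]
                refine Nat.mul_le_mul ?_ le_rfl
                refine le_trans (Finset.card_le_card_of_injOn Prod.fst ?_ ?_) le_rfl
                · intro q hq
                  rw [Finset.mem_coe, Finset.mem_filter, Finset.mem_product] at hq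
                  exact hq.1.1
                · intro q hq r hr h
                  rw [Finset.coe_filter] at hq hr
                  simp only [Set.mem_setOf_eq] at hq hr
                  ext
                  · exact h
                  · rw [← hq.2, ← hr.2, h]
              have h2 : ∑ q ∈ (B ×ˢ B).filter (fun q : ZMod p × ZMod p => ¬ q.1 = q.2),
                  ((Finset.univ : Finset (ZMod p × ZMod p)).filter
                    fun w => w.1 * q.1 + w.2 ∈ A ∧ w.1 * q.2 + w.2 ∈ A).card ≤
                  B.card ^ 2 * A.card ^ 2 := by
                refine le_trans (Finset.sum_le_card_nsmul _ _ _ hoff) ?_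
                rw [smul_eq_mul]
                refine Nat.mul_le_mul ?_ le_rfl
                refine le_trans (Finset.card_le_card (Finset.filter_subset _ _)) ?_
                rw [Finset.card_product, sq]
              omega
          _ = A.card ^ 2 * B.card ^ 2 + p ^ 2 * B.card := by ring
end

section
/- For every 0 < α ≤ 1 there exist a constant c with 0 < c ≤ 1 and a threshold x₀ such that for every integer x ≥ x₀ and every set T ⊆ {1, 2, ..., x} with |T| ≥ αx, the number of ordered triples (a, b, c') ∈ T × T × T with a + b = 2c' is greater than c·x². -/
open Finset

set_option maxHeartbeats 1600000 in
/-- Varnavides' theorem: for every `0 < α ≤ 1` there are `0 < c ≤ 1` and a threshold `x₀`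
such that for every `x ≥ x₀` and every `T ⊆ {1, ..., x}` with `|T| ≥ αx`, the number of
ordered triples `(a, b, c') ∈ T³` with `a + b = 2c'` exceeds `cx²`. -/
theorem varnavides (α : ℝ) (hα0 : 0 < α) (hα1 : α ≤ 1) :
    ∃ c : ℝ, 0 < c ∧ c ≤ 1 ∧ ∃ x₀ : ℕ, ∀ x : ℕ, x₀ ≤ x →
      ∀ T : Finset ℕ, T ⊆ Finset.Icc 1 x → α * x ≤ (T.card : ℝ) →
        c * (x : ℝ) ^ 2 <
          (((T ×ˢ T ×ˢ T).filter fun t => t.1 + t.2.1 = 2 * t.2.2).card : ℝ) := by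
  classical
  set n : ℕ := max (cornersTheoremBound (α / 4 / 3)) 2 with hn_def
  have hn2 : 2 ≤ n := le_max_right _ _
  have hnC : cornersTheoremBound (α / 4 / 3) ≤ n := le_max_left _ _
  set m : ℕ := n - 1 with hm_def
  have hm1 : 1 ≤ m := by omega
  have hmn : m + 1 = n := by omega
  set K : ℕ := ⌈(8 : ℝ) / α⌉₊ with hK_def
  have hK0 : 0 < K := Nat.ceil_pos.2 (by positivity)
  have hKα : 8 / α ≤ (K : ℝ) := Nat.le_ceil _
  have hKR : (0:ℝ) < K := by exact_mod_cast hK0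
  have hmR : (0:ℝ) < m := by exact_mod_cast hm1
  have hnR : (0:ℝ) < n := by positivity
  have hKα' : (1 : ℝ) / K ≤ α / 8 := by
    rw [div_le_div_iff₀ hKR (by norm_num : (0:ℝ) < 8)]
    have : (8:ℝ) ≤ K * α := by
      have := (div_le_iff₀ hα0).1 hKα
      linarith
    linarith
  refine ⟨min 1 (α / (8 * K * m * n ^ 2)), lt_min one_pos (by positivity), min_le_left _ _,
    max 1 (2 * K * m), ?_⟩
  intro x hx T hT hTcard
  have hx1 : 1 ≤ x := le_trans (le_max_left _ _) hx
  have hx2 : 2 * K * m ≤ x := le_trans (le_max_right _ _) hx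
  have hxR : (1:ℝ) ≤ x := by exact_mod_cast hx1
  set D : ℕ := x / (K * m) with hD_def
  -- the middle part of T
  set T' : Finset ℕ := T.filter (fun t => x / K < t ∧ t ≤ x - x / K) with hT'_def
  have hxK : ((x / K : ℕ) : ℝ) ≤ α / 8 * x := by
    calc ((x / K : ℕ) : ℝ) ≤ (x : ℝ) / K := Nat.cast_div_le
    _ = x * (1 / K) := by ring
    _ ≤ x * (α / 8) := by
        apply mul_le_mul_of_nonneg_left hKα' (by positivity)
    _ = α / 8 * x := by ring
  have hT'card : 3 * α / 4 * x ≤ (T'.card : ℝ) := by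
    have hsub : T.filter (fun t => ¬(x / K < t ∧ t ≤ x - x / K)) ⊆
        Icc 1 (x / K) ∪ Icc (x - x / K + 1) x := by
      intro t ht
      rw [mem_filter] at ht
      have h1 := hT ht.1
      rw [mem_Icc] at h1
      have h2 := ht.2
      simp only [mem_union, mem_Icc]
      omega
    have hcard2 : (T.filter (fun t => ¬(x / K < t ∧ t ≤ x - x / K))).card ≤ 2 * (x / K) := by
      calc _ ≤ (Icc 1 (x / K) ∪ Icc (x - x / K + 1) x).card := card_le_card hsub
      _ ≤ (Icc 1 (x / K)).card + (Icc (x - x / K + 1) x).card := card_union_le _ _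
      _ ≤ 2 * (x / K) := by
          rw [Nat.card_Icc, Nat.card_Icc]
          have : x / K ≤ x := Nat.div_le_self _ _
          omega
    have hsplit : T'.card + (T.filter (fun t => ¬(x / K < t ∧ t ≤ x - x / K))).card = T.card :=
      card_filter_add_card_filter_not _
    have : (T.card : ℝ) ≤ (T'.card : ℝ) + 2 * ((x / K : ℕ) : ℝ) := by
      push_cast [← hsplit]
      have : ((T.filter (fun t => ¬(x / K < t ∧ t ≤ x - x / K))).card : ℝ) ≤ 2 * ((x / K : ℕ) : ℝ) := by
        exact_mod_cast hcard2
      linarith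
    linarith
  -- per-difference good starting points
  have hGoodS : ∀ d, 1 ≤ d → d ≤ D → α / 2 * x ≤
      (((Icc 1 x).filter (fun s => s + m * d ≤ x ∧
        α / 4 * n ≤ ((T.filter fun t => ∃ j < n, t = s + j * d).card : ℝ))).card : ℝ) := by
      intro d hd1 hdD
      have hd0 : 0 < d := hd1
      have hmd : m * d ≤ x / K := by
        calc m * d ≤ m * D := Nat.mul_le_mul_left _ hdD
        _ = (x / K / m) * m := by rw [hD_def, Nat.div_div_eq_div_mul, mul_comm]
        _ ≤ x / K := Nat.div_mul_le_self _ _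
      have hKx : x / K ≤ x := Nat.div_le_self _ _
      set u : ℕ := x / K with hu_def
      set S : Finset ℕ := (Icc 1 x).filter (fun s => s + m * d ≤ x) with hS_def
      set cnt : ℕ → ℕ := fun s => (T.filter fun t => ∃ j < n, t = s + j * d).card with hcnt_def
      have hGeq : (Icc 1 x).filter (fun s => s + m * d ≤ x ∧
          α / 4 * n ≤ ((T.filter fun t => ∃ j < n, t = s + j * d).card : ℝ)) =
          S.filter (fun s => α / 4 * n ≤ (cnt s : ℝ)) := by
        rw [hS_def, filter_filter]
      rw [hGeq]
      -- lower bound on the total count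
      have hlow : T'.card * n ≤ ∑ s ∈ S, cnt s := by
        rw [← Finset.card_sigma]
        have hmaps : ∀ p ∈ T' ×ˢ range n,
            (⟨p.1 - p.2 * d, p.1⟩ : (_ : ℕ) × ℕ) ∈
              S.sigma (fun s => T.filter fun t => ∃ j < n, t = s + j * d) := by
          rintro ⟨t, j⟩ hp
          rw [mem_product, mem_range] at hp
          obtain ⟨ht', hj⟩ := hp
          rw [hT'_def, mem_filter] at ht'
          obtain ⟨htT, htl, htr⟩ := ht'
          have hjm : j ≤ m := by omega
          have hjd : j * d ≤ m * d := Nat.mul_le_mul_right _ hjm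
          rw [mem_sigma, mem_filter, mem_filter, mem_Icc]
          dsimp only
          refine ⟨⟨⟨by omega, by omega⟩, by omega⟩, htT, j, hj, by omega⟩
        have hinj : Set.InjOn (fun p : ℕ × ℕ => (⟨p.1 - p.2 * d, p.1⟩ : (_ : ℕ) × ℕ))
            ↑(T' ×ˢ range n) := by
          rintro ⟨t, j⟩ hp ⟨t', j'⟩ hp' heq
          simp only [coe_product, Set.mem_prod, mem_coe, mem_range] at hp hp'
          obtain ⟨ht', hj⟩ := hp
          obtain ⟨ht'2, hj'⟩ := hp'
          rw [hT'_def, mem_filter] at ht' ht'2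
          have hjd : j * d ≤ m * d := Nat.mul_le_mul_right _ (by omega)
          have hjd' : j' * d ≤ m * d := Nat.mul_le_mul_right _ (by omega)
          have h2 : t = t' := congrArg (fun z : (_ : ℕ) × ℕ => z.2) heq
          have h1 : t - j * d = t' - j' * d := congrArg (fun z : (_ : ℕ) × ℕ => z.1) heq
          subst h2
          obtain ⟨htT, htl, htr⟩ := ht'
          have : j * d = j' * d := by omega
          have : j = j' := Nat.eq_of_mul_eq_mul_right hd0 this
          subst this
          rfl
        have := Finset.card_le_card_of_injOn _ hmaps hinj
        rwa [card_product, card_range] at this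
      have hcnt_le : ∀ s, cnt s ≤ n := by
        intro s
        have hsub : T.filter (fun t => ∃ j < n, t = s + j * d) ⊆
            (range n).image (fun j => s + j * d) := by
          intro t ht
          rw [mem_filter] at ht
          obtain ⟨j, hj, rfl⟩ := ht.2
          exact mem_image_of_mem _ (mem_range.2 hj)
        calc cnt s ≤ ((range n).image (fun j => s + j * d)).card := card_le_card hsub
        _ ≤ (range n).card := card_image_le
        _ = n := card_range n
      -- upper bound on the total count
      set G : ℕ := (S.filter (fun s => α / 4 * n ≤ (cnt s : ℝ))).card with hG_def
      have hup : (∑ s ∈ S, (cnt s : ℝ)) ≤ G * n + x * (α / 4 * n) := by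
        rw [← Finset.sum_filter_add_sum_filter_not S (fun s => α / 4 * n ≤ (cnt s : ℝ))]
        have h1 : ∑ s ∈ S.filter (fun s => α / 4 * n ≤ (cnt s : ℝ)), (cnt s : ℝ) ≤ G * n := by
          have := Finset.sum_le_card_nsmul (S.filter (fun s => α / 4 * n ≤ (cnt s : ℝ)))
            (fun s => (cnt s : ℝ)) n (fun s _ => by exact_mod_cast hcnt_le s)
          rwa [nsmul_eq_mul] at this
        have h2 : ∑ s ∈ S.filter (fun s => ¬ α / 4 * n ≤ (cnt s : ℝ)), (cnt s : ℝ) ≤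
            x * (α / 4 * n) := by
          have hb := Finset.sum_le_card_nsmul (S.filter (fun s => ¬ α / 4 * n ≤ (cnt s : ℝ)))
            (fun s => (cnt s : ℝ)) (α / 4 * n) (fun s hs => le_of_not_ge (mem_filter.1 hs).2)
          rw [nsmul_eq_mul] at hb
          refine hb.trans ?_
          have hcard : ((S.filter (fun s => ¬ α / 4 * n ≤ (cnt s : ℝ))).card : ℝ) ≤ x := by
            have : (S.filter (fun s => ¬ α / 4 * n ≤ (cnt s : ℝ))).card ≤ x := by
              calc _ ≤ S.card := card_le_card (filter_subset _ _)
              _ ≤ (Icc 1 x).card := card_le_card (filter_subset _ _)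
              _ = x := by rw [Nat.card_Icc]; omega
            exact_mod_cast this
          have hpos : (0:ℝ) ≤ α / 4 * n := by positivity
          exact mul_le_mul_of_nonneg_right hcard hpos
        linarith
      have hlowR : (T'.card : ℝ) * n ≤ ∑ s ∈ S, (cnt s : ℝ) := by
        rw [← Nat.cast_sum]
        exact_mod_cast hlow
      have hring : (x:ℝ) * (α / 4 * n) = (α / 4 * x) * n := by ring
      have hfin : (α / 2 * x) * n ≤ (G:ℝ) * n := by nlinarith [hT'card, hlowR, hup]
      exact le_of_mul_le_mul_right hfin hnR
  set GS : ℕ → Finset ℕ := fun d => (Icc 1 x).filter (fun s => s + m * d ≤ x ∧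
      α / 4 * n ≤ ((T.filter fun t => ∃ j < n, t = s + j * d).card : ℝ)) with hGS_def
  set Good : Finset ((_ : ℕ) × ℕ) := (Icc 1 D).sigma GS with hGood_def
  have hGood_lb : α / 2 * x * D ≤ (Good.card : ℝ) := by
    rw [hGood_def, card_sigma, Nat.cast_sum]
    calc α / 2 * x * D = ∑ _d ∈ Icc 1 D, α / 2 * x := by
          rw [Finset.sum_const, Nat.card_Icc, Nat.add_sub_cancel, nsmul_eq_mul]
          ring
    _ ≤ ∑ d ∈ Icc 1 D, ((GS d).card : ℝ) :=
        Finset.sum_le_sum (fun d hd => hGoodS d (mem_Icc.1 hd).1 (mem_Icc.1 hd).2)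
  -- choose a nontrivial 3-AP in each good progression
  have hwit : ∀ p : (_ : ℕ) × ℕ, ∃ A B C : ℕ, p ∈ Good →
      A < n ∧ B < n ∧ C < n ∧ p.2 + A * p.1 ∈ T ∧ p.2 + B * p.1 ∈ T ∧ p.2 + C * p.1 ∈ T ∧
        A + C = B + B ∧ A ≠ B := by
    intro p
    by_cases hp : p ∈ Good
    · obtain ⟨d, s⟩ := p
      rw [hGood_def, mem_sigma] at hp
      obtain ⟨hd, hs⟩ := hp
      rw [mem_Icc] at hd
      rw [hGS_def, mem_filter, mem_Icc] at hs
      obtain ⟨⟨hs1, hs2⟩, hs3, hs4⟩ := hs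
      have hd0 : 0 < d := hd.1
      set A' : Finset ℕ := (range n).filter (fun j => s + j * d ∈ T) with hA'_def
      have hinj : Set.InjOn (fun j => s + j * d) ↑A' := by
        intro a _ b _ hab
        dsimp only at hab
        have h1 : a * d = b * d := by omega
        exact Nat.eq_of_mul_eq_mul_right hd0 h1
      have himg : A'.image (fun j => s + j * d) = T.filter (fun t => ∃ j < n, t = s + j * d) := by
        ext t
        simp only [mem_image, hA'_def, mem_filter, mem_range]
        constructor
        · rintro ⟨j, ⟨hj, hjT⟩, rfl⟩; exact ⟨hjT, j, hj, rfl⟩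
        · rintro ⟨hT', j, hj, rfl⟩; exact ⟨j, ⟨hj, hT'⟩, rfl⟩
      have hcardA : ((T.filter fun t => ∃ j < n, t = s + j * d).card : ℕ) = A'.card := by
        rw [← himg, card_image_of_injOn hinj]
      have hAε : α / 4 * n ≤ (A'.card : ℝ) := by
        rw [← Nat.cast_inj (R := ℝ)] at hcardA
        · exact hcardA ▸ hs4
      have roth := roth_3ap_theorem_nat (α / 4) (by positivity) hnC A'
        (filter_subset _ _) hAε
      unfold ThreeAPFree at roth
      push_neg at roth
      obtain ⟨a, ha, b, hb, c, hc, habc, hab⟩ := roth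
      rw [mem_coe, hA'_def, mem_filter, mem_range] at ha hb hc
      exact ⟨a, b, c, fun _ => ⟨ha.1, hb.1, hc.1, ha.2, hb.2, hc.2, habc, hab⟩⟩
    · exact ⟨0, 0, 0, fun h => absurd h hp⟩
  choose fA fB fC hf using hwit
  set φ : (_ : ℕ) × ℕ → ℕ × ℕ × ℕ :=
    fun p => (p.2 + fA p * p.1, p.2 + fC p * p.1, p.2 + fB p * p.1) with hφ_def
  have himgT : Good.image φ ⊆ (T ×ˢ T ×ˢ T).filter (fun t => t.1 + t.2.1 = 2 * t.2.2) := by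
    intro y hy
    rw [mem_image] at hy
    obtain ⟨p, hp, rfl⟩ := hy
    obtain ⟨hA, hB, hC, hAT, hBT, hCT, hsum, hAB⟩ := hf p hp
    rw [mem_filter, mem_product, mem_product]
    simp only [hφ_def]
    refine ⟨⟨hAT, hCT, hBT⟩, ?_⟩
    have h2 : fA p * p.1 + fC p * p.1 = fB p * p.1 + fB p * p.1 := by
      rw [← add_mul, hsum, add_mul]
    calc p.2 + fA p * p.1 + (p.2 + fC p * p.1)
        = p.2 + p.2 + (fA p * p.1 + fC p * p.1) := by ring
    _ = p.2 + p.2 + (fB p * p.1 + fB p * p.1) := by rw [h2]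
    _ = 2 * (p.2 + fB p * p.1) := by ring
  have hfib : ∀ y ∈ Good.image φ, (Good.filter (fun p => φ p = y)).card ≤ n * n := by
    intro y _
    have hkey : ∀ p ∈ Good.filter (fun p => φ p = y),
        (max y.1 y.2.2 - min y.1 y.2.2) = (max (fA p) (fB p) - min (fA p) (fB p)) * p.1 ∧
        1 ≤ max (fA p) (fB p) - min (fA p) (fB p) ∧
        max (fA p) (fB p) - min (fA p) (fB p) < n ∧
        (y.1 - p.2) / p.1 = fA p ∧ y.1 = p.2 + fA p * p.1 ∧ fA p < n ∧ 0 < p.1 := by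
      intro p hp
      rw [mem_filter] at hp
      obtain ⟨hpG, hpy⟩ := hp
      obtain ⟨hA, hB, hC, _, _, _, _, hAB⟩ := hf p hpG
      have hd0 : 0 < p.1 := by
        rw [hGood_def, mem_sigma, mem_Icc] at hpG
        exact hpG.1.1
      have hy1 : y.1 = p.2 + fA p * p.1 := by rw [← hpy]
      have hy3 : y.2.2 = p.2 + fB p * p.1 := by rw [← hpy]
      have hdivA : (y.1 - p.2) / p.1 = fA p := by
        rw [hy1, Nat.add_sub_cancel_left, Nat.mul_div_cancel _ hd0]
      refine ⟨?_, ?_, ?_, hdivA, hy1, hA, hd0⟩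
      · rcases le_total (fA p) (fB p) with h | h
        · have hle : p.2 + fA p * p.1 ≤ p.2 + fB p * p.1 :=
            Nat.add_le_add_left (Nat.mul_le_mul_right _ h) _
          rw [hy1, hy3, max_eq_right hle, min_eq_left hle, max_eq_right h, min_eq_left h,
            Nat.add_sub_add_left, ← Nat.sub_mul]
        · have hle : p.2 + fB p * p.1 ≤ p.2 + fA p * p.1 :=
            Nat.add_le_add_left (Nat.mul_le_mul_right _ h) _
          rw [hy1, hy3, max_eq_left hle, min_eq_right hle, max_eq_left h, min_eq_right h,
            Nat.add_sub_add_left, ← Nat.sub_mul]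
      · omega
      · omega
    have hmaps : ∀ p ∈ Good.filter (fun p => φ p = y),
        (((max y.1 y.2.2 - min y.1 y.2.2) / p.1, (y.1 - p.2) / p.1) : ℕ × ℕ) ∈
          range n ×ˢ range n := by
      intro p hp
      obtain ⟨he, hq1, hqn, hdivA, hy1, hA, hd0⟩ := hkey p hp
      rw [mem_product, mem_range, mem_range]
      constructor
      · rw [he, Nat.mul_div_cancel _ hd0]
        exact hqn
      · rw [hdivA]
        exact hA
    have hinj : Set.InjOn (fun p : (_ : ℕ) × ℕ =>
        (((max y.1 y.2.2 - min y.1 y.2.2) / p.1, (y.1 - p.2) / p.1) : ℕ × ℕ))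
        ↑(Good.filter (fun p => φ p = y)) := by
      intro p hp p' hp' hg
      rw [mem_coe] at hp hp'
      obtain ⟨he, hq1, hqn, hdivA, hy1, hA, hd0⟩ := hkey p hp
      obtain ⟨he', hq1', hqn', hdivA', hy1', hA', hd0'⟩ := hkey p' hp'
      have hg1 : (max y.1 y.2.2 - min y.1 y.2.2) / p.1 = (max y.1 y.2.2 - min y.1 y.2.2) / p'.1 :=
        congrArg Prod.fst hg
      have hg2 : (y.1 - p.2) / p.1 = (y.1 - p'.2) / p'.1 := congrArg Prod.snd hg
      have e1 : (max y.1 y.2.2 - min y.1 y.2.2) / p.1 = max (fA p) (fB p) - min (fA p) (fB p) := by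
        rw [he]; exact Nat.mul_div_cancel _ hd0
      have e2 : (max y.1 y.2.2 - min y.1 y.2.2) / p'.1 =
          max (fA p') (fB p') - min (fA p') (fB p') := by
        rw [he']; exact Nat.mul_div_cancel _ hd0'
      rw [e1, e2] at hg1
      -- hg1 : q = q'
      have hdd : p.1 = p'.1 := by
        have h1 : (max (fA p) (fB p) - min (fA p) (fB p)) * p.1 =
            (max (fA p) (fB p) - min (fA p) (fB p)) * p'.1 := by
          rw [← he, he', ← hg1]
        exact Nat.eq_of_mul_eq_mul_left hq1 h1
      have hAA : fA p = fA p' := by rw [← hdivA, ← hdivA', hg2]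
      have hss : p.2 = p'.2 := by
        have := hy1
        rw [hy1', hAA, hdd] at this
        omega
      obtain ⟨d, s⟩ := p
      obtain ⟨d', s'⟩ := p'
      simp only at hdd hss
      subst hdd
      subst hss
      rfl
    calc (Good.filter (fun p => φ p = y)).card ≤ (range n ×ˢ range n).card :=
        Finset.card_le_card_of_injOn _ hmaps hinj
    _ = n * n := by rw [card_product, card_range]
  have hcard_le : Good.card ≤ n * n * (Good.image φ).card :=
    card_le_mul_card_image Good (n * n) hfib
  have hTri : (Good.image φ).card ≤
      ((T ×ˢ T ×ˢ T).filter fun t => t.1 + t.2.1 = 2 * t.2.2).card := card_le_card himgT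
  set Tri : ℝ := (((T ×ˢ T ×ˢ T).filter fun t => t.1 + t.2.1 = 2 * t.2.2).card : ℝ) with hTri_def
  have hG3 : (Good.card : ℝ) ≤ n * n * Tri := by
    rw [hTri_def]
    calc (Good.card : ℝ) ≤ ((n * n * (Good.image φ).card : ℕ) : ℝ) := by exact_mod_cast hcard_le
    _ ≤ _ := by
        push_cast
        have : ((Good.image φ).card : ℝ) ≤
            (((T ×ˢ T ×ˢ T).filter fun t => t.1 + t.2.1 = 2 * t.2.2).card : ℝ) := by
          exact_mod_cast hTri
        nlinarith [this, hnR]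
  have hDlb : (x : ℝ) / (2 * K * m) ≤ (D : ℝ) := by
    have h1 : x < D * (K * m) + K * m := by
      rw [hD_def]
      exact Nat.lt_div_mul_add (by positivity)
    have h1R : (x : ℝ) < D * (K * m) + K * m := by exact_mod_cast h1
    have h2R : (2 : ℝ) * K * m ≤ x := by exact_mod_cast hx2
    rw [div_le_iff₀ (by positivity)]
    nlinarith
  have hA1 : α / 2 * x * ((x : ℝ) / (2 * K * m)) ≤ (Good.card : ℝ) :=
    le_trans (mul_le_mul_of_nonneg_left hDlb (by positivity)) hGood_lb
  have hTri_lb : α * x ^ 2 / (4 * (K : ℝ) * m) ≤ n * n * Tri := by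
    calc α * x ^ 2 / (4 * (K : ℝ) * m) = α / 2 * x * ((x : ℝ) / (2 * K * m)) := by
          field_simp
          ring
    _ ≤ (Good.card : ℝ) := hA1
    _ ≤ n * n * Tri := hG3
  have hTri_pos : α * x ^ 2 / (4 * (K : ℝ) * m) / (n * n) ≤ Tri := by
    rw [div_le_iff₀ (by positivity)]
    linarith [hTri_lb]
  calc min 1 (α / (8 * K * m * n ^ 2)) * (x:ℝ) ^ 2 ≤ α / (8 * K * m * n ^ 2) * x ^ 2 :=
      mul_le_mul_of_nonneg_right (min_le_right _ _) (by positivity)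
  _ < α * x ^ 2 / (4 * (K : ℝ) * m) / (n * n) := by
      rw [div_div, div_mul_eq_mul_div, div_lt_div_iff₀ (by positivity) (by positivity)]
      have hnn : ((n:ℝ)) ^ 2 = n * n := sq (n:ℝ)
      rw [hnn]
      have hpos : (0:ℝ) < α * x ^ 2 * (K * m * (n * n)) := by positivity
      nlinarith [hpos]
  _ ≤ Tri := hTri_pos
end
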